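/- arXiv:0705.3390 — 6 statements merged into one kernel-verified Lean document; each statement's English description precedes it below -/
import Mathlib

section
/- Let (Λ,p) be a multifoliate structure on {1,…,n}. Under the canonical identification of the limit of ξ(Λ,p) with ℝ^n, a linear automorphism g of ℝ^n belongs to GL(ξ(Λ,p)) if and only if g ∈ GL(Λ,p); moreover the assignment sending g ∈ GL(Λ,p) to the family (g_α) determined by g_α ∘ pr_α = pr_α ∘ g is a group isomorphism from GL(Λ,p) onto GL(ξ(Λ,p)). -/
/-! Common definitions: projective systems of finite-dimensional real vector
spaces over a poset, their limits, the groups `GL(ξ)`, invariant subspaces,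
completeness, completions, and multifoliate structures. -/

structure ProjSys (Λ : Type) [PartialOrder Λ] where
  L : Λ → Type
  [instAddCommGroup : ∀ α, AddCommGroup (L α)]
  [instModule : ∀ α, Module ℝ (L α)]
  [instFiniteDimensional : ∀ α, FiniteDimensional ℝ (L α)]
  map : ∀ {α β : Λ}, α ≤ β → (L β →ₗ[ℝ] L α)
  map_id : ∀ α : Λ, map (le_refl α) = LinearMap.id
  map_comp : ∀ {α β γ : Λ} (h₁ : α ≤ β) (h₂ : β ≤ γ),
    (map h₁).comp (map h₂) = map (h₁.trans h₂)
  map_surj : ∀ {α β : Λ} (h : α ≤ β), Function.Surjective (map h)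

attribute [instance] ProjSys.instAddCommGroup ProjSys.instModule
  ProjSys.instFiniteDimensional

namespace ProjSys

variable {Λ : Type} [PartialOrder Λ]

/-- The limit of a projective system, as a submodule of the product. -/
def limSub (ξ : ProjSys Λ) : Submodule ℝ (∀ α, ξ.L α) where
  carrier := {x | ∀ (α β : Λ) (h : α ≤ β), ξ.map h (x β) = x α}
  add_mem' := by
    intro a b ha hb α β h
    simp only [Pi.add_apply, map_add, ha α β h, hb α β h]
  zero_mem' := by
    intro α β h
    simp only [Pi.zero_apply, map_zero]
  smul_mem' := by
    intro c a ha α β h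
    simp only [Pi.smul_apply, map_smul, ha α β h]

/-- The canonical projection from the limit to the `α`-th space. -/
def proj (ξ : ProjSys Λ) (α : Λ) : ↥ξ.limSub →ₗ[ℝ] ξ.L α :=
  (LinearMap.proj α : (∀ β, ξ.L β) →ₗ[ℝ] ξ.L α).comp ξ.limSub.subtype

/-- `GL(ξ)`: the linear automorphisms of the limit that cover automorphisms
of every space of the system. -/
def GLset (ξ : ProjSys Λ) : Set (↥ξ.limSub ≃ₗ[ℝ] ↥ξ.limSub) :=
  {f | ∀ α : Λ, ∃ fα : ξ.L α ≃ₗ[ℝ] ξ.L α,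
    ∀ x : ↥ξ.limSub, ξ.proj α (f x) = fα (ξ.proj α x)}

/-- A subspace of the limit is invariant if every element of `GL(ξ)`
maps it into itself. -/
def Invariant (ξ : ProjSys Λ) (K : Submodule ℝ ↥ξ.limSub) : Prop :=
  ∀ f ∈ ξ.GLset, ∀ x ∈ K, f x ∈ K

/-- A projective system is complete if every finite-codimensional invariant
subspace of the limit is the kernel of some canonical projection. -/
def Complete (ξ : ProjSys Λ) : Prop :=
  ∀ K : Submodule ℝ ↥ξ.limSub, ξ.Invariant K →
    FiniteDimensional ℝ (↥ξ.limSub ⧸ K) → ∃ α : Λ, K = LinearMap.ker (ξ.proj α)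

/-- The index set of the completion: all finite-codimensional invariant
subspaces, ordered by reverse inclusion. -/
def CompletionIndex (ξ : ProjSys Λ) : Type :=
  {K : Submodule ℝ ↥ξ.limSub //
    ξ.Invariant K ∧ FiniteDimensional ℝ (↥ξ.limSub ⧸ K)}

instance (ξ : ProjSys Λ) : PartialOrder ξ.CompletionIndex :=
  PartialOrder.lift (fun a => OrderDual.toDual a.1)
    (fun _ _ h => Subtype.ext (congrArg OrderDual.ofDual h))

/-- The completion of a projective system: the quotients by all
finite-codimensional invariant subspaces, with the canonical epimorphisms. -/
noncomputable def completion (ξ : ProjSys Λ) : ProjSys ξ.CompletionIndex where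
  L a := ↥ξ.limSub ⧸ a.1
  instAddCommGroup := fun _ => inferInstance
  instModule := fun _ => inferInstance
  instFiniteDimensional := fun a => a.2.2
  map := fun {a b} h => Submodule.mapQ b.1 a.1 LinearMap.id
    (by rw [Submodule.comap_id]; exact h)
  map_id := by
    intro a
    apply Submodule.linearMap_qext
    ext x
    simp [Submodule.mapQ_apply]
  map_comp := by
    intro a b c h₁ h₂
    apply Submodule.linearMap_qext
    ext x
    simp [Submodule.mapQ_apply]
  map_surj := by
    intro a b h y
    obtain ⟨x, rfl⟩ := Submodule.Quotient.mk_surjective _ y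
    exact ⟨Submodule.Quotient.mk x, by simp [Submodule.mapQ_apply]⟩

/-- An isomorphism of projective systems: an order isomorphism of the index
sets together with compatible linear isomorphisms of the spaces. -/
def Isomorphic {Λ' : Type} [PartialOrder Λ'] (ξ : ProjSys Λ)
    (ξ' : ProjSys Λ') : Prop :=
  ∃ ω : Λ ≃o Λ', ∃ ψ : ∀ α : Λ, ξ.L α ≃ₗ[ℝ] ξ'.L (ω α),
    ∀ (α β : Λ) (h : α ≤ β) (x : ξ.L β),
      ξ'.map (ω.monotone h) (ψ β x) = ψ α (ξ.map h x)

/-- Equivalence of projective systems: a linear isomorphism of the limits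
conjugating `GL(ξ)` onto `GL(ξ')` (such a conjugation is automatically a
group isomorphism). -/
def Equivalent {Λ' : Type} [PartialOrder Λ'] (ξ : ProjSys Λ)
    (ξ' : ProjSys Λ') : Prop :=
  ∃ φ : ↥ξ.limSub ≃ₗ[ℝ] ↥ξ'.limSub,
    Set.BijOn (fun f => (φ.symm.trans f).trans φ) ξ.GLset ξ'.GLset

end ProjSys

/-- `GL(Λ,p)` for a multifoliate structure `(Λ,p)` on `{1,…,n}`: the linear
automorphisms `f` of `ℝⁿ` whose matrix entries `f i j = f(e_j) i` vanish
whenever `p i ≱ p j`. -/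
def GLmf {n : ℕ} {Λ : Type} [PartialOrder Λ] (p : Fin n → Λ) :
    Set ((Fin n → ℝ) ≃ₗ[ℝ] (Fin n → ℝ)) :=
  {f | ∀ i j : Fin n, ¬ p j ≤ p i → f (Pi.single j 1) i = 0}

/-- Equivalence of multifoliate structures. -/
def MFEquiv {n : ℕ} {Λ Ω : Type} [PartialOrder Λ] [PartialOrder Ω]
    (p : Fin n → Λ) (q : Fin n → Ω) : Prop :=
  ∃ φ : (Fin n → ℝ) ≃ₗ[ℝ] (Fin n → ℝ),
    Set.BijOn (fun f => (φ.symm.trans f).trans φ) (GLmf p) (GLmf q)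

/-- The projective system `ξ(Λ,p)` associated with a multifoliate structure:
the spaces `L_α = ℝ^{H_α}`, `H_α = {i : p i ≤ α}`, with the coordinate
projections. -/
noncomputable def mfSys {n : ℕ} {Λ : Type} [PartialOrder Λ] (p : Fin n → Λ) : ProjSys Λ where
  L α := {i : Fin n // p i ≤ α} → ℝ
  instAddCommGroup := fun _ => inferInstance
  instModule := fun _ => inferInstance
  instFiniteDimensional := fun _ => inferInstance
  map := fun {α β} h => LinearMap.funLeft ℝ ℝ (fun i => ⟨i.1, i.2.trans h⟩)
  map_id := fun _ => rfl
  map_comp := fun _ _ => rfl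
  map_surj := by
    intro α β h
    apply LinearMap.funLeft_surjective_of_injective
    intro i j hij
    cases i
    cases j
    simpa using hij

/-- `ker pr_α ⊆ ℝⁿ`: the vectors vanishing on all coordinates `i` with
`p i ≤ α`. -/
def kerpr {n : ℕ} {Λ : Type} [PartialOrder Λ] (p : Fin n → Λ) (α : Λ) :
    Submodule ℝ (Fin n → ℝ) where
  carrier := {x | ∀ i : Fin n, p i ≤ α → x i = 0}
  add_mem' := by
    intro a b ha hb i hi
    simp [ha i hi, hb i hi]
  zero_mem' := by
    intro i hi
    rfl
  smul_mem' := by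
    intro c a ha i hi
    simp [ha i hi]

/-- The antichains of a poset, ordered by domination. -/
def AntichainsIn (Λ : Type) [PartialOrder Λ] : Type :=
  {A : Finset Λ // IsAntichain (· ≤ ·) (A : Set Λ)}

instance {Λ : Type} [PartialOrder Λ] : LE (AntichainsIn Λ) :=
  ⟨fun A B => ∀ a ∈ A.1, ∃ b ∈ B.1, a ≤ b⟩

/-- The `GL(Λ,p)`-invariant subspaces of `ℝⁿ`, ordered by reverse
inclusion. -/
def InvariantSubspaces {n : ℕ} {Λ : Type} [PartialOrder Λ]
    (p : Fin n → Λ) : Type :=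
  {K : Submodule ℝ (Fin n → ℝ) // ∀ g ∈ GLmf p, ∀ x ∈ K, g x ∈ K}

instance {n : ℕ} {Λ : Type} [PartialOrder Λ] (p : Fin n → Λ) :
    LE (InvariantSubspaces p) :=
  ⟨fun K K' => K'.1 ≤ K.1⟩

/-- A bundled multifoliate structure on `{1,…,n}`. -/
structure MultifoliateStructure (n : ℕ) where
  Lam : Type
  [instPO : PartialOrder Lam]
  [instFin : Finite Lam]
  p : Fin n → Lam
  surj : Function.Surjective p

attribute [instance] MultifoliateStructure.instPO MultifoliateStructure.instFin

/-! An automorphism `f` of the limit of a projective system with surjective canonical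
projections covers automorphisms of all the spaces `L_α` exactly when it preserves every
`ker pr_α`: the induced endomorphism of `L_α` is onto, hence bijective in finite dimension.
For `ξ(Λ,p)` the identification `ι` of `ℝⁿ` with the limit turns `ker pr_α` into the
coordinate subspace `kerpr p α`, and an automorphism `g` of `ℝⁿ` preserves all of these iff
`g i j = 0` whenever `p j ≰ p i` (test `α = p i` on the basis vector `e_j`). -/

open Function LinearMap

namespace LinearMap

variable {K M V : Type*} [Field K] [AddCommGroup M] [Module K M] [AddCommGroup V] [Module K V]

theorem exists_linearEquiv_comp_eq_iff_ker_le_comap [FiniteDimensional K V] {π : M →ₗ[K] V}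
    (hπ : Surjective π) (f : M ≃ₗ[K] M) :
    (∃ fπ : V ≃ₗ[K] V, ∀ x, π (f x) = fπ (π x)) ↔ ker π ≤ (ker π).comap f.toLinearMap := by
  constructor
  · rintro ⟨fπ, hfπ⟩ x hx
    rw [mem_ker] at hx
    rw [Submodule.mem_comap, LinearEquiv.coe_coe, mem_ker, hfπ, hx, map_zero]
  · intro hf
    let φ : V →ₗ[K] V :=
      (ker π).liftQ (π ∘ₗ f) (fun _ hx => hf hx) ∘ₗ (π.quotKerEquivOfSurjective hπ).symm
    have hφ : ∀ x, φ (π x) = π (f x) := fun x => by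
      simp only [φ, comp_apply, LinearEquiv.coe_coe, quotKerEquivOfSurjective_symm_apply]
      rfl
    have hφ_surj : Surjective φ := fun y => by
      obtain ⟨x, rfl⟩ := (hπ.comp f.surjective) y
      exact ⟨π x, hφ x⟩
    exact ⟨.ofBijective φ ⟨injective_iff_surjective.2 hφ_surj, hφ_surj⟩, fun x => (hφ x).symm⟩

end LinearMap

theorem ProjSys.mem_GLset_iff {Λ : Type} [PartialOrder Λ] (ξ : ProjSys Λ)
    (hξ : ∀ α, Surjective (ξ.proj α)) (f : ↥ξ.limSub ≃ₗ[ℝ] ↥ξ.limSub) :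
    f ∈ ξ.GLset ↔ ∀ α, ker (ξ.proj α) ≤ (ker (ξ.proj α)).comap f.toLinearMap :=
  forall_congr' fun α => exists_linearEquiv_comp_eq_iff_ker_le_comap (hξ α) f

namespace LinearEquiv

variable {R M N : Type*} [Semiring R] [AddCommMonoid M] [Module R M] [AddCommMonoid N] [Module R N]

def autCongr (ι : M ≃ₗ[R] N) : (M ≃ₗ[R] M) ≃* (N ≃ₗ[R] N) where
  toFun g := (ι.symm.trans g).trans ι
  invFun f := (ι.trans f).trans ι.symm
  left_inv g := by ext; simp
  right_inv f := by ext; simp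
  map_mul' g g' := by ext; simp

theorem le_comap_autCongr_iff (ι : M ≃ₗ[R] N) (g : M ≃ₗ[R] M) (K : Submodule R N) :
    K ≤ K.comap (ι.autCongr g).toLinearMap ↔
      K.comap ι.toLinearMap ≤ (K.comap ι.toLinearMap).comap g.toLinearMap := by
  constructor
  · intro h x hx
    simpa [autCongr] using h hx
  · intro h y hy
    exact h (show ι (ι.symm y) ∈ K by simpa using hy)

end LinearEquiv

theorem mem_kerpr {n : ℕ} {Λ : Type} [PartialOrder Λ] {p : Fin n → Λ} {α : Λ} {x : Fin n → ℝ} :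
    x ∈ kerpr p α ↔ ∀ i, p i ≤ α → x i = 0 :=
  Iff.rfl

theorem mem_GLmf_iff_forall_kerpr_le {n : ℕ} {Λ : Type} [PartialOrder Λ] (p : Fin n → Λ)
    (g : (Fin n → ℝ) ≃ₗ[ℝ] (Fin n → ℝ)) :
    g ∈ GLmf p ↔ ∀ α, kerpr p α ≤ (kerpr p α).comap g.toLinearMap := by
  constructor
  · intro hg α x hx i hi
    rw [← Finset.univ_sum_single x, map_sum, Finset.sum_apply]
    refine Finset.sum_eq_zero fun j _ => ?_
    by_cases hj : p j ≤ α
    · rw [mem_kerpr.1 hx j hj, Pi.single_zero, map_zero, Pi.zero_apply]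
    · rw [← mul_one (x j), ← smul_eq_mul, Pi.single_smul', map_smul, Pi.smul_apply,
        LinearEquiv.coe_coe, hg i j fun hji => hj (hji.trans hi), smul_zero]
  · intro hg i j hij
    refine mem_kerpr.1 (hg (p i) (mem_kerpr.2 fun k hk => Pi.single_eq_of_ne ?_ _)) i le_rfl
    rintro rfl
    exact hij hk

namespace mfSys

variable {n : ℕ} {Λ : Type} [PartialOrder Λ] (p : Fin n → Λ)

def limEquiv : (Fin n → ℝ) ≃ₗ[ℝ] ↥(mfSys p).limSub where
  toFun x := ⟨fun _ i => x i.1, fun _ _ _ => rfl⟩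
  invFun y i := y.1 (p i) ⟨i, le_rfl⟩
  map_add' _ _ := rfl
  map_smul' _ _ := rfl
  left_inv _ := rfl
  right_inv y := Subtype.ext <| funext fun α => funext fun i =>
    (congrFun (y.2 (p i.1) α i.2) ⟨i.1, le_rfl⟩).symm

theorem proj_surjective (α : Λ) : Surjective ((mfSys p).proj α) := fun y =>
  let ⟨x, hx⟩ := funLeft_surjective_of_injective ℝ ℝ _ Subtype.val_injective y
  ⟨limEquiv p x, hx⟩

theorem comap_ker_proj (α : Λ) :
    (ker ((mfSys p).proj α)).comap (limEquiv p).toLinearMap = kerpr p α :=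
  Submodule.ext fun _ => funext_iff.trans Subtype.forall

end mfSys

theorem stmt_6_general {n : ℕ} {Λ : Type} [PartialOrder Λ]
    (p : Fin n → Λ) :
    ∃ ι : (Fin n → ℝ) ≃ₗ[ℝ] ↥(mfSys p).limSub,
      (∀ (x : Fin n → ℝ) (α : Λ) (i : {i : Fin n // p i ≤ α}),
        (mfSys p).proj α (ι x) i = x i.1) ∧
      (∀ g : (Fin n → ℝ) ≃ₗ[ℝ] (Fin n → ℝ),
        (ι.symm.trans g).trans ι ∈ (mfSys p).GLset ↔ g ∈ GLmf p) ∧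
      Set.BijOn (fun g => (ι.symm.trans g).trans ι) (GLmf p)
        ((mfSys p).GLset) := by
  have hGL : ∀ g, (mfSys.limEquiv p).autCongr g ∈ (mfSys p).GLset ↔ g ∈ GLmf p := fun g => by
    simp only [(mfSys p).mem_GLset_iff (mfSys.proj_surjective p),
      LinearEquiv.le_comap_autCongr_iff, mfSys.comap_ker_proj, mem_GLmf_iff_forall_kerpr_le]
  exact ⟨mfSys.limEquiv p, fun _ _ _ => rfl, hGL, (mfSys.limEquiv p).autCongr.toEquiv.bijOn hGL⟩

/-- Under the canonical identification `ι` of `ℝⁿ` with the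
limit of `ξ(Λ,p)`, a linear automorphism `g` of `ℝⁿ` belongs to
`GL(ξ(Λ,p))` iff `g ∈ GL(Λ,p)`, and `g ↦ ι ∘ g ∘ ι⁻¹` is a group
isomorphism from `GL(Λ,p)` onto `GL(ξ(Λ,p))`. -/
theorem stmt_6 {n : ℕ} {Λ : Type} [PartialOrder Λ] [Finite Λ]
    (p : Fin n → Λ) (hp : Function.Surjective p) :
    ∃ ι : (Fin n → ℝ) ≃ₗ[ℝ] ↥(mfSys p).limSub,
      (∀ (x : Fin n → ℝ) (α : Λ) (i : {i : Fin n // p i ≤ α}),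
        (mfSys p).proj α (ι x) i = x i.1) ∧
      (∀ g : (Fin n → ℝ) ≃ₗ[ℝ] (Fin n → ℝ),
        (ι.symm.trans g).trans ι ∈ (mfSys p).GLset ↔ g ∈ GLmf p) ∧
      Set.BijOn (fun g => (ι.symm.trans g).trans ι) (GLmf p)
        ((mfSys p).GLset) :=
  stmt_6_general p
end

section
/- If (Λ,p) and (Ω,q) are equivalent multifoliate structures on {1,…,n}, then the completed projective systems ξ̃(Λ,p) and ξ̃(Ω,q) are isomorphic as projective systems of vector spaces. -/
/-!
An element of `GL(ξ(Λ,p))` is exactly an automorphism of the limit preserving every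
`ker pr_α`: a map preserving the kernel of a surjection onto a finite-dimensional space
descends to an automorphism of the target. Under the identification of the limit with `ℝⁿ`
these kernels are the coordinate subspaces `kerpr p α`, whose common stabiliser is `GL(Λ,p)`.
Hence an equivalence of multifoliate structures is an equivalence of the projective systems.
Such an equivalence `φ` carries the finite-codimensional invariant subspaces `K` bijectively
and monotonically to `φ(K)`, and the induced isomorphisms `L/K ≃ L'/φ(K)` commute with the
canonical epimorphisms.
-/

theorem LinearMap.exists_linearEquiv_semiconj_of_ker_le {K M N : Type*} [Field K]
    [AddCommGroup M] [Module K M] [AddCommGroup N] [Module K N] [FiniteDimensional K N]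
    {π : M →ₗ[K] N} (hπ : Function.Surjective π) {f : M ≃ₗ[K] M}
    (hf : LinearMap.ker π ≤ (LinearMap.ker π).comap f.toLinearMap) :
    ∃ g : N ≃ₗ[K] N, Function.Semiconj π f g := by
  obtain ⟨s, hs⟩ := π.exists_rightInverse_of_surjective (LinearMap.range_eq_top.2 hπ)
  have hπs (y : N) : π (s y) = y := LinearMap.congr_fun hs y
  let g₀ : N →ₗ[K] N := π ∘ₗ f.toLinearMap ∘ₗ s
  -- `x - s (π x)` lies in `ker π`, hence so does its image under `f`.
  have hsemiconj : Function.Semiconj π f g₀ := fun x => by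
    have : f (x - s (π x)) ∈ LinearMap.ker π := hf (by simp [hπs])
    simpa [g₀, sub_eq_zero] using this
  have hsurj : Function.Surjective g₀ := fun y =>
    ⟨π (f.symm (s y)), by rw [← hsemiconj, LinearEquiv.apply_symm_apply, hπs]⟩
  exact ⟨.ofBijective g₀ ⟨LinearMap.injective_iff_surjective.2 hsurj, hsurj⟩, hsemiconj⟩

theorem LinearEquiv.bijOn_conj_of_forall_mem_iff {R M N : Type*} [Semiring R] [AddCommMonoid M]
    [Module R M] [AddCommMonoid N] [Module R N] (e : M ≃ₗ[R] N)
    {S : Set (M ≃ₗ[R] M)} {T : Set (N ≃ₗ[R] N)}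
    (h : ∀ f, f ∈ S ↔ (e.symm.trans f).trans e ∈ T) :
    Set.BijOn (fun f => (e.symm.trans f).trans e) S T := by
  refine ⟨fun f hf => (h f).1 hf, fun f _ g _ hfg => ?_, fun g hg => ?_⟩
  · ext x
    simpa using DFunLike.congr_fun hfg (e x)
  · have hconj : (e.symm.trans ((e.trans g).trans e.symm)).trans e = g := by ext; simp
    exact ⟨_, (h _).2 (by rwa [hconj]), hconj⟩

theorem Submodule.comap_le_comap_comap_iff_conj {R M N : Type*} [Semiring R] [AddCommMonoid M]
    [Module R M] [AddCommMonoid N] [Module R N] (e : M ≃ₗ[R] N) (f : M ≃ₗ[R] M)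
    (K : Submodule R N) :
    K.comap e.toLinearMap ≤ (K.comap e.toLinearMap).comap f.toLinearMap ↔
      K ≤ K.comap ((e.symm.trans f).trans e).toLinearMap := by
  refine ⟨fun h v hv => ?_, fun h x hx => ?_⟩
  · simpa using h (x := e.symm v) (by simpa using hv)
  · simpa using h hx

namespace ProjSys

variable {Λ Λ' : Type} [PartialOrder Λ] [PartialOrder Λ'] {ξ : ProjSys Λ} {ξ' : ProjSys Λ'}

theorem mem_GLset_iff_s8 (hproj : ∀ α, Function.Surjective (ξ.proj α))
    (f : ξ.limSub ≃ₗ[ℝ] ξ.limSub) :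
    f ∈ ξ.GLset ↔
      ∀ α, LinearMap.ker (ξ.proj α) ≤ (LinearMap.ker (ξ.proj α)).comap f.toLinearMap := by
  refine ⟨fun hf α x hx => ?_, fun hf α =>
    LinearMap.exists_linearEquiv_semiconj_of_ker_le (hproj α) (hf α)⟩
  obtain ⟨fα, hfα⟩ := hf α
  rw [Submodule.mem_comap, LinearMap.mem_ker, LinearEquiv.coe_coe, hfα, LinearMap.mem_ker.1 hx,
    map_zero]

theorem Invariant.map {φ : ξ.limSub ≃ₗ[ℝ] ξ'.limSub}
    (hφ : Set.SurjOn (fun f => (φ.symm.trans f).trans φ) ξ.GLset ξ'.GLset)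
    {K : Submodule ℝ ξ.limSub} (hK : ξ.Invariant K) : ξ'.Invariant (K.map φ.toLinearMap) := by
  rintro _ hg _ ⟨x, hx, rfl⟩
  obtain ⟨f, hf, rfl⟩ := hφ hg
  exact ⟨f x, hK f hf x hx, by simp⟩

theorem Invariant.comap {φ : ξ.limSub ≃ₗ[ℝ] ξ'.limSub}
    (hφ : Set.MapsTo (fun f => (φ.symm.trans f).trans φ) ξ.GLset ξ'.GLset)
    {K : Submodule ℝ ξ'.limSub} (hK : ξ'.Invariant K) : ξ.Invariant (K.comap φ.toLinearMap) :=
  fun f hf x hx => by simpa using hK _ (hφ hf) (φ x) hx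

noncomputable def completionIndexOrderIso (φ : ξ.limSub ≃ₗ[ℝ] ξ'.limSub)
    (hφ : Set.BijOn (fun f => (φ.symm.trans f).trans φ) ξ.GLset ξ'.GLset) :
    ξ.CompletionIndex ≃o ξ'.CompletionIndex where
  toFun a := ⟨a.1.map φ.toLinearMap, Invariant.map hφ.surjOn a.2.1, by
    have := a.2.2; exact (Submodule.Quotient.equiv _ _ φ rfl).finiteDimensional⟩
  invFun b := ⟨b.1.comap φ.toLinearMap, Invariant.comap hφ.mapsTo b.2.1, by
    have := b.2.2
    exact (Submodule.Quotient.equiv _ _ φ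
      (Submodule.map_comap_eq_of_surjective φ.surjective _)).symm.finiteDimensional⟩
  left_inv a := Subtype.ext (Submodule.comap_map_eq_of_injective φ.injective _)
  right_inv b := Subtype.ext (Submodule.map_comap_eq_of_surjective φ.surjective _)
  map_rel_iff' {a b} := Submodule.map_le_map_iff_of_injective φ.injective b.1 a.1

theorem Equivalent.completion_isomorphic (h : ξ.Equivalent ξ') :
    ξ.completion.Isomorphic ξ'.completion := by
  obtain ⟨φ, hφ⟩ := h
  refine ⟨completionIndexOrderIso φ hφ, fun a => Submodule.Quotient.equiv a.1 _ φ rfl, ?_⟩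
  intro a b hab x
  obtain ⟨x, rfl⟩ := Submodule.Quotient.mk_surjective _ x
  rfl

end ProjSys

section Multifoliate

variable {n : ℕ} {Λ Ω : Type} [PartialOrder Λ] [PartialOrder Ω]

noncomputable def mfLimEquiv (p : Fin n → Λ) : (mfSys p).limSub ≃ₗ[ℝ] (Fin n → ℝ) where
  toFun x i := x.1 (p i) ⟨i, le_rfl⟩
  map_add' _ _ := rfl
  map_smul' _ _ := rfl
  invFun v := ⟨fun _ j => v j.1, fun _ _ _ => rfl⟩
  left_inv x := Subtype.ext <| funext fun α => funext fun j =>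
    congrFun (x.2 (p j.1) α j.2).symm ⟨j.1, le_rfl⟩
  right_inv _ := rfl

theorem mfSys_proj_apply (p : Fin n → Λ) (α : Λ) (x : (mfSys p).limSub)
    (j : {i // p i ≤ α}) : (mfSys p).proj α x j = mfLimEquiv p x j.1 :=
  congrFun (x.2 (p j.1) α j.2) ⟨j.1, le_rfl⟩

theorem ker_mfSys_proj (p : Fin n → Λ) (α : Λ) :
    LinearMap.ker ((mfSys p).proj α) = (kerpr p α).comap (mfLimEquiv p).toLinearMap := by
  ext x
  rw [LinearMap.mem_ker, Submodule.mem_comap]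
  exact ⟨fun h i hi => (mfSys_proj_apply p α x ⟨i, hi⟩).symm.trans (congrFun h ⟨i, hi⟩),
    fun h => funext fun j => (mfSys_proj_apply p α x j).trans (h j.1 j.2)⟩

theorem mfSys_proj_surjective (p : Fin n → Λ) (α : Λ) :
    Function.Surjective ((mfSys p).proj α) := by
  intro y
  obtain ⟨v, rfl⟩ := LinearMap.funLeft_surjective_of_injective ℝ ℝ _ Subtype.val_injective y
  exact ⟨(mfLimEquiv p).symm v,
    funext fun j => by simp [mfSys_proj_apply, LinearMap.funLeft_apply]⟩

theorem mem_GLmf_iff (p : Fin n → Λ) (g : (Fin n → ℝ) ≃ₗ[ℝ] (Fin n → ℝ)) :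
    g ∈ GLmf p ↔ ∀ α, kerpr p α ≤ (kerpr p α).comap g.toLinearMap := by
  refine ⟨fun hg α x hx i hi => ?_, fun hg i j hij => ?_⟩
  · rw [← Finset.univ_sum_single x]
    simp only [LinearEquiv.coe_coe, map_sum, Finset.sum_apply]
    refine Finset.sum_eq_zero fun j _ => ?_
    by_cases hj : p j ≤ α
    · simp [hx j hj]
    · rw [← mul_one (x j), ← smul_eq_mul, Pi.single_smul', map_smul, Pi.smul_apply,
        hg i j fun hji => hj (hji.trans hi), smul_zero]
  · have hsingle : Pi.single j (1 : ℝ) ∈ kerpr p (p i) := fun k hk =>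
      Pi.single_eq_of_ne (fun hkj => hij (by rwa [← hkj])) 1
    exact hg (p i) hsingle i le_rfl

theorem mem_GLset_mfSys_iff (p : Fin n → Λ) (f : (mfSys p).limSub ≃ₗ[ℝ] (mfSys p).limSub) :
    f ∈ (mfSys p).GLset ↔ ((mfLimEquiv p).symm.trans f).trans (mfLimEquiv p) ∈ GLmf p := by
  simp only [ProjSys.mem_GLset_iff_s8 (mfSys_proj_surjective p), ker_mfSys_proj,
    Submodule.comap_le_comap_comap_iff_conj, mem_GLmf_iff]

theorem MFEquiv.mfSys_equivalent {p : Fin n → Λ} {q : Fin n → Ω} (h : MFEquiv p q) :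
    (mfSys p).Equivalent (mfSys q) := by
  obtain ⟨φ, hφ⟩ := h
  have hp := (mfLimEquiv p).bijOn_conj_of_forall_mem_iff (mem_GLset_mfSys_iff p)
  have hq := (mfLimEquiv q).symm.bijOn_conj_of_forall_mem_iff (S := GLmf q)
    (T := (mfSys q).GLset) fun g => by
      rw [mem_GLset_mfSys_iff]
      convert Iff.rfl using 2
      ext
      simp
  refine ⟨((mfLimEquiv p).trans φ).trans (mfLimEquiv q).symm, ?_⟩
  convert hq.comp (hφ.comp hp) using 1
  funext f
  ext
  simp

end Multifoliate

theorem stmt_8_general {n : ℕ} {Λ Ω : Type} [PartialOrder Λ] [PartialOrder Ω]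
    (p : Fin n → Λ) (q : Fin n → Ω)
    (h : MFEquiv p q) :
    (mfSys p).completion.Isomorphic (mfSys q).completion :=
  h.mfSys_equivalent.completion_isomorphic

/-- Equivalent multifoliate structures have isomorphic
completed projective systems. -/
theorem stmt_8 {n : ℕ} {Λ Ω : Type} [PartialOrder Λ] [PartialOrder Ω]
    [Finite Λ] [Finite Ω]
    (p : Fin n → Λ) (q : Fin n → Ω)
    (hp : Function.Surjective p) (hq : Function.Surjective q)
    (h : MFEquiv p q) :
    (mfSys p).completion.Isomorphic (mfSys q).completion :=
  stmt_8_general p q h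
end

section
/- Let (Λ,p) be a multifoliate structure on {1,…,n}. A linear subspace K ⊆ ℝ^n is invariant under every element of GL(Λ,p) if and only if K = ker pr_{α_1} ∩ … ∩ ker pr_{α_k} for some finite set of pairwise incomparable elements α_1, …, α_k ∈ Λ (with the empty intersection understood as ℝ^n), where ker pr_α = {x ∈ ℝ^n : x^i = 0 for all i with p(i) ≤ α}. -/
/-!
Every `g ∈ GL(Λ,p)` has entries `g i j = 0` unless `p j ≤ p i`, so each coordinate `(g x) i` with
`p i ≤ α` only involves coordinates `x j` with `p j ≤ α`; hence each `ker pr_α` is invariant.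

Conversely, `GL(Λ,p)` contains the elementary matrices `1 + E_{ji}` for `p i ≤ p j`. Applied to
`y ∈ K` with `y i ≠ 0` they give `y i • e_j ∈ K`. With `j = i` (a dilation) this shows that an
invariant `K` is spanned by the basis vectors `e_j` it contains; with `j ≠ i` it shows that the
set `Z` of coordinates with `e_i ∉ K` is a lower set along `p`. So `K` is cut out by the lower
closure of `p(Z)`, which is generated by the antichain of maximal elements of `p(Z)`.
-/

lemma LinearMap.transvection_injective {K V : Type*} [Field K] [AddCommGroup V] [Module K V]
    {f : Module.Dual K V} {v : V} (h : 1 + f v ≠ 0) :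
    Function.Injective (LinearMap.transvection f v) := by
  refine (injective_iff_map_eq_zero _).2 fun x hx => ?_
  rw [LinearMap.transvection.apply] at hx
  have hfx : f x * (1 + f v) = 0 := by
    simpa [mul_add, mul_comm] using congrArg f hx
  rw [mul_eq_zero, or_iff_left h] at hfx
  simpa [hfx] using hx

lemma Submodule.mem_iff_forall_single_notMem {ι R : Type*} [Fintype ι] [DecidableEq ι]
    [Semiring R] {K : Submodule R (ι → R)} (hK : ∀ y ∈ K, ∀ i, y i ≠ 0 → Pi.single i 1 ∈ K)
    (x : ι → R) :
    x ∈ K ↔ ∀ i, Pi.single i 1 ∉ K → x i = 0 := by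
  refine ⟨fun hx i hi => by_contra fun hxi => hi (hK x hx i hxi), fun hx => ?_⟩
  rw [← Finset.univ_sum_single x]
  refine K.sum_mem fun i _ => ?_
  by_cases hi : Pi.single i 1 ∈ K
  · simpa [← Pi.single_smul'] using K.smul_mem (x i) hi
  · simp [hx i hi]

lemma exists_antichain_lowerClosure_eq {Λ : Type*} [PartialOrder Λ] {S : Set Λ} (hS : S.Finite) :
    ∃ A : Finset Λ, IsAntichain (· ≤ ·) (A : Set Λ) ∧
      lowerClosure (A : Set Λ) = lowerClosure S := by
  have hmax : {α | Maximal (· ∈ S) α}.Finite := hS.subset fun _ h => h.prop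
  refine ⟨hmax.toFinset, by simpa using setOfPred_maximal_antichain _, le_antisymm ?_ ?_⟩
  · exact lowerClosure_mono fun α h => (hmax.mem_toFinset.1 h).prop
  · refine lowerClosure_le.2 fun α hα => ?_
    obtain ⟨β, hαβ, hβ⟩ := hS.exists_le_maximal hα
    exact mem_lowerClosure.2 ⟨β, hmax.mem_toFinset.2 hβ, hαβ⟩

/-- The elementary matrix `1 + E_{ji}`; for `i = j` it is the dilation by `2` of the `i`-th
coordinate. -/
noncomputable def elementaryEquiv {ι : Type*} [Fintype ι] [DecidableEq ι] (i j : ι) :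
    (ι → ℝ) ≃ₗ[ℝ] (ι → ℝ) :=
  LinearEquiv.ofInjectiveEndo (LinearMap.transvection (LinearMap.proj i) (Pi.single j 1))
    (LinearMap.transvection_injective (by rcases eq_or_ne i j with rfl | h <;> simp [*]))

lemma elementaryEquiv_apply {ι : Type*} [Fintype ι] [DecidableEq ι] (i j : ι) (x : ι → ℝ) :
    elementaryEquiv i j x = x + x i • Pi.single j 1 :=
  rfl

section

variable {n : ℕ} {Λ : Type} [PartialOrder Λ] {p : Fin n → Λ}

lemma elementaryEquiv_mem_GLmf {i j : Fin n} (h : p i ≤ p j) : elementaryEquiv i j ∈ GLmf p := by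
  intro k l hlk
  have hkl : l ≠ k := by rintro rfl; exact hlk le_rfl
  rcases eq_or_ne l i with rfl | hli
  · have hjk : j ≠ k := by rintro rfl; exact hlk h
    simp [elementaryEquiv_apply, hkl.symm, hjk.symm]
  · simp [elementaryEquiv_apply, hkl.symm, hli.symm]

lemma single_mem_of_forall_GLmf {K : Submodule ℝ (Fin n → ℝ)}
    (hK : ∀ g ∈ GLmf p, ∀ x ∈ K, g x ∈ K) {y : Fin n → ℝ} (hy : y ∈ K) {i j : Fin n}
    (hyi : y i ≠ 0) (hij : p i ≤ p j) : Pi.single j 1 ∈ K := by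
  have h : y i • Pi.single j 1 ∈ K := by
    simpa [elementaryEquiv_apply] using K.sub_mem (hK _ (elementaryEquiv_mem_GLmf hij) y hy) hy
  simpa [smul_smul, inv_mul_cancel₀ hyi] using K.smul_mem (y i)⁻¹ h

lemma GLmf.map_mem_kerpr {g : (Fin n → ℝ) ≃ₗ[ℝ] (Fin n → ℝ)} (hg : g ∈ GLmf p) {α : Λ}
    {x : Fin n → ℝ} (hx : x ∈ kerpr p α) : g x ∈ kerpr p α := by
  intro i hi
  rw [← LinearEquiv.coe_coe, LinearMap.pi_apply_eq_sum_univ g.toLinearMap, Finset.sum_apply]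
  refine Finset.sum_eq_zero fun j _ => ?_
  by_cases hji : p j ≤ p i
  · simp [hx j (hji.trans hi)]
  · have hej : (fun k => if j = k then (1 : ℝ) else 0) = Pi.single j 1 := by
      ext k; simp [Pi.single_apply, eq_comm]
    simp [hej, hg i j hji]

lemma mem_iInf_kerpr {A : Finset Λ} {x : Fin n → ℝ} :
    x ∈ ⨅ α ∈ A, kerpr p α ↔ ∀ i, (∃ α ∈ A, p i ≤ α) → x i = 0 := by
  simp only [Submodule.mem_iInf]
  exact ⟨fun hx i ⟨α, hα, hi⟩ => hx α hα i hi, fun hx α hα i hi => hx i ⟨α, hα, hi⟩⟩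

end

theorem stmt_11_general {n : ℕ} {Λ : Type} [PartialOrder Λ]
    (p : Fin n → Λ)
    (K : Submodule ℝ (Fin n → ℝ)) :
    (∀ g ∈ GLmf p, ∀ x ∈ K, g x ∈ K) ↔
      ∃ A : Finset Λ, IsAntichain (· ≤ ·) (A : Set Λ) ∧
        K = ⨅ α ∈ A, kerpr p α := by
  constructor
  · intro hK
    set Z : Set (Fin n) := {i | Pi.single i 1 ∉ K}
    obtain ⟨A, hA, hAZ⟩ := exists_antichain_lowerClosure_eq ((Set.toFinite Z).image p)
    have hZA (i : Fin n) : Pi.single i 1 ∉ K ↔ ∃ α ∈ A, p i ≤ α := by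
      simp only [← Finset.mem_coe, ← mem_lowerClosure, hAZ]
      refine ⟨fun hi => subset_lowerClosure ⟨i, hi, rfl⟩, ?_⟩
      rintro ⟨_, ⟨j, hj, rfl⟩, hij⟩ hi
      exact hj (single_mem_of_forall_GLmf hK hi (by simp) hij)
    refine ⟨A, hA, SetLike.ext fun x => ?_⟩
    rw [Submodule.mem_iff_forall_single_notMem
      (fun y hy i hyi => single_mem_of_forall_GLmf hK hy hyi le_rfl), mem_iInf_kerpr]
    exact forall_congr' fun i => imp_congr_left (hZA i)
  · rintro ⟨A, -, rfl⟩ g hg x hx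
    simp only [Submodule.mem_iInf] at hx ⊢
    exact fun α hα => GLmf.map_mem_kerpr hg (hx α hα)

/-- A subspace `K ⊆ ℝⁿ` is invariant under every element of
`GL(Λ,p)` iff it is the intersection of the `ker pr_α` over a finite set of
pairwise incomparable elements of `Λ` (the empty intersection being `ℝⁿ`). -/
theorem stmt_11 {n : ℕ} {Λ : Type} [PartialOrder Λ] [Finite Λ]
    (p : Fin n → Λ) (hp : Function.Surjective p)
    (K : Submodule ℝ (Fin n → ℝ)) :
    (∀ g ∈ GLmf p, ∀ x ∈ K, g x ∈ K) ↔
      ∃ A : Finset Λ, IsAntichain (· ≤ ·) (A : Set Λ) ∧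
        K = ⨅ α ∈ A, kerpr p α :=
  stmt_11_general p K
end

section
/- Let (Λ,p) be a multifoliate structure on {1,…,n}. The map sending an antichain A ⊆ Λ (a finite set of pairwise incomparable elements, possibly empty) to the subspace ∩_{α∈A} ker pr_α of ℝ^n is an order isomorphism from the set of antichains of Λ, ordered by A ≤ B iff every element of A is ≤ some element of B, onto the set of GL(Λ,p)-invariant subspaces of ℝ^n ordered by reverse inclusion. -/
/-! `GL(Λ,p)` contains the dilatransvections `x ↦ x + x i • e j` for `p i ≤ p j`.
Hence an invariant subspace containing `x` contains `e j` whenever `p i ≤ p j` for some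
`i` with `x i ≠ 0`, so it is the space of vectors vanishing on `p ⁻¹' L` for a lower set
`L` of `Λ`; conversely all these spaces are invariant, and surjectivity of `p` recovers
`L` from its space. Lower sets of a finite poset correspond to antichains via their
maximal elements, and `⋂_{α ∈ A} ker pr_α` is the space of the lower closure of `A`. -/

section Antichains

variable {Λ : Type} [PartialOrder Λ]

noncomputable def AntichainsIn.orderIsoLowerSet [Finite Λ] : AntichainsIn Λ ≃o LowerSet Λ where
  toFun A := lowerClosure (A.1 : Set Λ)
  invFun L := ⟨(Set.toFinite {a | Maximal (· ∈ L) a}).toFinset,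
    by simpa using setOfPred_maximal_antichain (· ∈ L)⟩
  left_inv A := Subtype.ext <| Finset.ext fun a => by
    rw [Set.Finite.mem_toFinset, Set.mem_ofPred_eq, ← Finset.mem_coe]
    exact A.2.maximal_mem_lowerClosure_iff_mem
  right_inv L := SetLike.ext fun a => by
    simp only [mem_lowerClosure, Set.Finite.mem_toFinset, Set.mem_ofPred_eq, SetLike.mem_coe]
    refine ⟨fun ⟨b, hb, hab⟩ => L.lower hab hb.prop, fun ha => ?_⟩
    obtain ⟨b, hab, hb⟩ := Finite.exists_le_maximal (p := (· ∈ L)) ha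
    exact ⟨b, hb, hab⟩
  map_rel_iff' {A B} := by
    change lowerClosure _ ≤ lowerClosure _ ↔ ∀ a ∈ A.1, ∃ b ∈ B.1, a ≤ b
    simp [lowerClosure_le, Set.subset_def]

end Antichains

section VanishingOn

variable {n : ℕ} {Λ : Type} (p : Fin n → Λ)

def vanishingOn (s : Set Λ) : Submodule ℝ (Fin n → ℝ) :=
  Submodule.pi (p ⁻¹' s) fun _ => ⊥

variable {p}

theorem mem_vanishingOn {s : Set Λ} {x : Fin n → ℝ} :
    x ∈ vanishingOn p s ↔ ∀ i, p i ∈ s → x i = 0 := by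
  simp [vanishingOn, Submodule.mem_pi]

theorem vanishingOn_anti {s t : Set Λ} (h : s ⊆ t) : vanishingOn p t ≤ vanishingOn p s :=
  fun _ hx => mem_vanishingOn.2 fun i hi => mem_vanishingOn.1 hx i (h hi)

theorem single_mem_vanishingOn_iff {s : Set Λ} {i : Fin n} :
    (Pi.single i 1 : Fin n → ℝ) ∈ vanishingOn p s ↔ p i ∉ s := by
  simp only [mem_vanishingOn]
  refine ⟨fun h hi => by simpa using h i hi, fun h j hj => ?_⟩
  exact Pi.single_eq_of_ne (by rintro rfl; exact h hj) 1

variable [PartialOrder Λ] (p)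

theorem iInf_kerpr_eq_vanishingOn (A : Finset Λ) :
    ⨅ α ∈ A, kerpr p α = vanishingOn p (lowerClosure (A : Set Λ)) := by
  ext x
  simp only [Submodule.mem_iInf, mem_vanishingOn, SetLike.mem_coe, mem_lowerClosure]
  exact ⟨fun h i ⟨α, hα, hi⟩ => h α hα i hi, fun h α hα i hi => h i ⟨α, hα, hi⟩⟩

theorem vanishingOn_invariant (L : LowerSet Λ) :
    ∀ g ∈ GLmf p, ∀ x ∈ vanishingOn p L, g x ∈ vanishingOn p L := by
  intro g hg x hx
  rw [mem_vanishingOn] at hx ⊢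
  intro i hi
  rw [pi_eq_sum_univ' x]
  simp only [map_sum, map_smul, Finset.sum_apply, Pi.smul_apply, smul_eq_mul]
  refine Finset.sum_eq_zero fun j _ => ?_
  by_cases hji : p j ≤ p i
  · rw [hx j (L.lower hji hi), zero_mul]
  · rw [hg i j hji, mul_zero]

end VanishingOn

section InvariantSubspace

variable {n : ℕ} {Λ : Type} [PartialOrder Λ] {p : Fin n → Λ}

noncomputable def coordDilatransvection (i j : Fin n) : (Fin n → ℝ) ≃ₗ[ℝ] (Fin n → ℝ) :=
  LinearEquiv.dilatransvection (f := LinearMap.proj i) (v := Pi.single j 1) <| by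
    rw [isUnit_iff_ne_zero]
    rcases eq_or_ne i j with rfl | hij
    · norm_num
    · simp [Pi.single_eq_of_ne hij]

theorem coordDilatransvection_apply (i j : Fin n) (x : Fin n → ℝ) :
    coordDilatransvection i j x = x + x i • Pi.single j 1 :=
  LinearEquiv.dilatransvection.apply

theorem coordDilatransvection_mem_GLmf {i j : Fin n} (hij : p i ≤ p j) :
    coordDilatransvection i j ∈ GLmf p := by
  intro k m hmk
  have hkm : k ≠ m := fun h => hmk (h ▸ le_rfl)
  rw [coordDilatransvection_apply, Pi.add_apply, Pi.single_eq_of_ne hkm, zero_add,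
    Pi.smul_apply, smul_eq_mul]
  rcases eq_or_ne i m with rfl | him
  · rw [Pi.single_eq_of_ne (show k ≠ j by rintro rfl; exact hmk hij)]
    simp
  · simp [Pi.single_eq_of_ne him]

variable {K : Submodule ℝ (Fin n → ℝ)}

theorem smul_single_mem_of_invariant (hK : ∀ g ∈ GLmf p, ∀ x ∈ K, g x ∈ K) {i j : Fin n}
    (hij : p i ≤ p j) {x : Fin n → ℝ} (hx : x ∈ K) : x i • Pi.single j 1 ∈ K := by
  have h := K.sub_mem (hK _ (coordDilatransvection_mem_GLmf hij) x hx) hx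
  rwa [coordDilatransvection_apply, add_sub_cancel_left] at h

theorem single_mem_of_invariant (hK : ∀ g ∈ GLmf p, ∀ x ∈ K, g x ∈ K) {x : Fin n → ℝ}
    (hx : x ∈ K) {i : Fin n} (hxi : x i ≠ 0) : (Pi.single i 1 : Fin n → ℝ) ∈ K := by
  simpa [smul_smul, hxi] using K.smul_mem (x i)⁻¹ (smul_single_mem_of_invariant hK (le_refl (p i)) hx)

theorem single_mem_of_le_of_invariant (hK : ∀ g ∈ GLmf p, ∀ x ∈ K, g x ∈ K) {i j : Fin n}
    (hij : p i ≤ p j) (hi : (Pi.single i 1 : Fin n → ℝ) ∈ K) :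
    (Pi.single j 1 : Fin n → ℝ) ∈ K := by
  simpa using smul_single_mem_of_invariant hK hij hi

variable (p K)

def vanishingLevels : LowerSet Λ :=
  lowerClosure (p '' {i | (Pi.single i 1 : Fin n → ℝ) ∉ K})

variable {p K}

theorem vanishingLevels_anti {K' : Submodule ℝ (Fin n → ℝ)} (h : K ≤ K') :
    vanishingLevels p K' ≤ vanishingLevels p K :=
  lowerClosure_mono <| Set.image_mono fun _ hi hiK => hi (h hiK)

theorem vanishingLevels_vanishingOn (hp : Function.Surjective p) (L : LowerSet Λ) :
    vanishingLevels p (vanishingOn p L) = L := by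
  simp only [vanishingLevels, single_mem_vanishingOn_iff, not_not]
  change lowerClosure (p '' (p ⁻¹' L)) = L
  rw [Set.image_preimage_eq _ hp, LowerSet.lowerClosure]

theorem vanishingOn_vanishingLevels (hK : ∀ g ∈ GLmf p, ∀ x ∈ K, g x ∈ K) :
    vanishingOn p (vanishingLevels p K) = K := by
  ext x
  rw [mem_vanishingOn]
  constructor
  · intro hx
    rw [pi_eq_sum_univ' x]
    refine K.sum_mem fun i _ => ?_
    by_cases hxi : x i = 0
    · simp [hxi]
    refine K.smul_mem _ (not_not.1 fun hiK => hxi (hx i ?_))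
    exact subset_lowerClosure ⟨i, hiK, rfl⟩
  · rintro hx i ⟨_, ⟨j, hjK, rfl⟩, hij⟩
    by_contra hxi
    exact hjK (single_mem_of_le_of_invariant hK hij (single_mem_of_invariant hK hx hxi))

variable (p)

noncomputable def LowerSet.orderIsoInvariantSubspaces (hp : Function.Surjective p) :
    LowerSet Λ ≃o InvariantSubspaces p where
  toFun L := ⟨vanishingOn p L, vanishingOn_invariant p L⟩
  invFun K := vanishingLevels p K.1
  left_inv := vanishingLevels_vanishingOn hp
  right_inv K := Subtype.ext (vanishingOn_vanishingLevels K.2)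
  map_rel_iff' {L L'} := by
    change vanishingOn p L' ≤ vanishingOn p L ↔ L ≤ L'
    refine ⟨fun h => ?_, fun h => vanishingOn_anti h⟩
    rw [← vanishingLevels_vanishingOn hp L, ← vanishingLevels_vanishingOn hp L']
    exact vanishingLevels_anti h

end InvariantSubspace

theorem stmt_12_general {n : ℕ} {Λ : Type} [PartialOrder Λ]
    (p : Fin n → Λ) (hp : Function.Surjective p) :
    ∃ e : AntichainsIn Λ ≃o InvariantSubspaces p,
      ∀ A : AntichainsIn Λ, (e A).1 = ⨅ α ∈ A.1, kerpr p α := by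
  have : Finite Λ := Finite.of_surjective p hp
  exact ⟨AntichainsIn.orderIsoLowerSet.trans (LowerSet.orderIsoInvariantSubspaces p hp),
    fun A => (iInf_kerpr_eq_vanishingOn p A.1).symm⟩

/-- `A ↦ ⋂_{α ∈ A} ker pr_α` is an order isomorphism from the
antichains of `Λ` (ordered by domination) onto the `GL(Λ,p)`-invariant
subspaces of `ℝⁿ` (ordered by reverse inclusion). -/
theorem stmt_12 {n : ℕ} {Λ : Type} [PartialOrder Λ] [Finite Λ]
    (p : Fin n → Λ) (hp : Function.Surjective p) :
    ∃ e : AntichainsIn Λ ≃o InvariantSubspaces p,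
      ∀ A : AntichainsIn Λ, (e A).1 = ⨅ α ∈ A.1, kerpr p α :=
  stmt_12_general p hp
end

section
/- If (Λ,p) and (Ω,q) are equivalent multifoliate structures on {1,…,n}, then there exist an order isomorphism ω : Λ → Ω and a permutation σ of {1,…,n} such that q = ω ∘ p ∘ σ; in particular, for every α ∈ Λ the fibers p⁻¹(α) and q⁻¹(ω(α)) have the same cardinality. -/
/-! For surjective `p`, the `GL(Λ,p)`-invariant subspaces of `ℝⁿ` are exactly the coordinate
subspaces spanned by the `e i` with `p i` in an upper set of `Λ`: an invariant subspace is stable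
under the shears `x ↦ x + x j • e i` (`p j ≤ p i`), which extract each coordinate vector and move
it upwards. A conjugation carrying `GL(Λ,p)` onto `GL(Ω,q)` therefore induces an order isomorphism
between the lattices of upper sets of `Λ` and `Ω`. By Birkhoff's representation theorem a finite
poset is recovered as the inf-irreducible upper sets `Ici α`, so this comes from an order
isomorphism `ω : Λ ≃o Ω`. As the conjugation preserves dimensions, `p` and `q` take equally many
values in `Ici α` and `Ici (ω α)`, and in `Ioi α` and `Ioi (ω α)`; so corresponding fibres have
equal size, which is exactly what is needed to build `σ`. -/

section CoordSubspace

variable (R : Type*) {ι : Type*}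

def coordSubspace [Semiring R] (s : Set ι) : Submodule R (ι → R) :=
  ⨅ i ∈ sᶜ, LinearMap.ker (LinearMap.proj i : (ι → R) →ₗ[R] R)

variable {R}

@[simp]
theorem mem_coordSubspace [Semiring R] {s : Set ι} {x : ι → R} :
    x ∈ coordSubspace R s ↔ ∀ i ∉ s, x i = 0 := by
  simp [coordSubspace]

theorem coordSubspace_le_coordSubspace_iff [Semiring R] [Nontrivial R] {s t : Set ι} :
    coordSubspace R s ≤ coordSubspace R t ↔ s ⊆ t := by
  classical
  refine ⟨fun h i hi => by_contra fun hit => ?_, fun h x hx => ?_⟩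
  · have hmem : Pi.single i (1 : R) ∈ coordSubspace R s :=
      mem_coordSubspace.mpr fun j hj => Pi.single_eq_of_ne (by rintro rfl; exact hj hi) _
    simpa using mem_coordSubspace.mp (h hmem) i hit
  · rw [mem_coordSubspace] at hx ⊢
    exact fun i hit => hx i fun his => hit (h his)

theorem finrank_coordSubspace [Ring R] [StrongRankCondition R] [Fintype ι] (s : Set ι) :
    Module.finrank R (coordSubspace R s) = Nat.card s := by
  classical
  rw [coordSubspace, (LinearMap.iInfKerProjEquiv R (fun _ : ι => R) disjoint_compl_right
    (by rw [Set.union_compl_self])).finrank_eq, Module.finrank_fintype_fun_eq_card,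
    Nat.card_eq_fintype_card]

end CoordSubspace

section Shear

variable {n : ℕ}

/-- For `i = j` this doubles the `j`-th coordinate. -/
noncomputable def shear (i j : Fin n) : (Fin n → ℝ) ≃ₗ[ℝ] (Fin n → ℝ) :=
  LinearEquiv.dilatransvection (f := LinearMap.proj j) (v := Pi.single i 1) <| by
    rw [isUnit_iff_ne_zero, LinearMap.proj_apply, Pi.single_apply]
    split_ifs <;> norm_num

theorem shear_apply (i j : Fin n) (x : Fin n → ℝ) :
    shear i j x = x + x j • Pi.single i 1 :=
  LinearEquiv.dilatransvection.apply

theorem shear_mem_GLmf {Λ : Type} [PartialOrder Λ] {p : Fin n → Λ} {i j : Fin n}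
    (hji : p j ≤ p i) : shear i j ∈ GLmf p := by
  intro k l hlk
  have hkl : k ≠ l := by rintro rfl; exact hlk le_rfl
  rw [shear_apply, Pi.add_apply, Pi.smul_apply, Pi.single_eq_of_ne hkl, zero_add,
    smul_eq_mul, Pi.single_apply, Pi.single_apply]
  split_ifs with hjl hki
  · subst hjl hki; exact absurd hji hlk
  all_goals simp

end Shear

section Invariant

variable {n : ℕ} {Λ : Type} [PartialOrder Λ] {p : Fin n → Λ}

def IsGLmfInvariant (p : Fin n → Λ) (K : Submodule ℝ (Fin n → ℝ)) : Prop :=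
  ∀ g ∈ GLmf p, ∀ x ∈ K, g x ∈ K

theorem IsGLmfInvariant.smul_single_mem {K : Submodule ℝ (Fin n → ℝ)}
    (hK : IsGLmfInvariant p K) {x : Fin n → ℝ} (hx : x ∈ K) {i j : Fin n}
    (hji : p j ≤ p i) : x j • Pi.single i (1 : ℝ) ∈ K := by
  have := K.sub_mem (hK _ (shear_mem_GLmf hji) x hx) hx
  rwa [shear_apply, add_sub_cancel_left] at this

theorem IsGLmfInvariant.eq_coordSubspace {K : Submodule ℝ (Fin n → ℝ)}
    (hK : IsGLmfInvariant p K) : K = coordSubspace ℝ {j | Pi.single j (1 : ℝ) ∈ K} := by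
  refine le_antisymm (fun x hx => mem_coordSubspace.mpr fun j hj => ?_) fun x hx => ?_
  · by_contra hxj
    exact hj ((K.smul_mem_iff hxj).mp (hK.smul_single_mem hx le_rfl))
  · rw [← Finset.univ_sum_single x]
    refine K.sum_mem fun j _ => ?_
    by_cases hj : Pi.single j (1 : ℝ) ∈ K
    · simpa [← Pi.single_smul] using K.smul_mem (x j) hj
    · simp [mem_coordSubspace.mp hx j hj]

theorem isGLmfInvariant_coordSubspace {U : Set Λ} (hU : IsUpperSet U) :
    IsGLmfInvariant p (coordSubspace ℝ (p ⁻¹' U)) := by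
  intro g hg x hx
  rw [← Finset.univ_sum_single x, map_sum]
  refine Submodule.sum_mem _ fun k _ => mem_coordSubspace.mpr fun i hi => ?_
  by_cases hk : p k ∈ U
  · rw [← mul_one (x k), ← smul_eq_mul, Pi.single_smul', map_smul, Pi.smul_apply,
      hg i k fun hki => hi (hU hki hk), smul_zero]
  · simp [mem_coordSubspace.mp hx k hk]

theorem isGLmfInvariant_iff_exists_upperSet (hp : Function.Surjective p)
    {K : Submodule ℝ (Fin n → ℝ)} :
    IsGLmfInvariant p K ↔ ∃ U : UpperSet Λ, coordSubspace ℝ (p ⁻¹' U) = K := by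
  refine ⟨fun hK => ?_, fun ⟨U, hU⟩ => hU ▸ isGLmfInvariant_coordSubspace U.upper⟩
  set J := {j | Pi.single j (1 : ℝ) ∈ K}
  have hJ : ∀ {i j}, j ∈ J → p j ≤ p i → i ∈ J := fun hj hji => by
    simpa [J] using hK.smul_single_mem hj hji
  have hupper : IsUpperSet (p '' J) := by
    rintro _ α hle ⟨j, hj, rfl⟩
    obtain ⟨i, rfl⟩ := hp α
    exact ⟨i, hJ hj hle, rfl⟩
  have hpJ : p ⁻¹' (p '' J) = J :=
    Set.Subset.antisymm (fun i ⟨j, hj, hji⟩ => hJ hj hji.le) (Set.subset_preimage_image p J)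
  exact ⟨⟨p '' J, hupper⟩, by rw [UpperSet.coe_mk, hpJ, ← hK.eq_coordSubspace]⟩

def upperSetCoordSubspace (hp : Function.Surjective p) :
    UpperSet Λ ↪o (Submodule ℝ (Fin n → ℝ))ᵒᵈ :=
  OrderEmbedding.ofMapLEIff (fun U => OrderDual.toDual (coordSubspace ℝ (p ⁻¹' U))) fun U V => by
    rw [OrderDual.toDual_le_toDual, coordSubspace_le_coordSubspace_iff,
      hp.preimage_subset_preimage_iff, UpperSet.coe_subset_coe]

theorem isGLmfInvariant_map_iff {Ω : Type} [PartialOrder Ω] {q : Fin n → Ω}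
    {φ : (Fin n → ℝ) ≃ₗ[ℝ] (Fin n → ℝ)}
    (hφ : Set.BijOn (fun f => (φ.symm.trans f).trans φ) (GLmf p) (GLmf q))
    {K : Submodule ℝ (Fin n → ℝ)} :
    IsGLmfInvariant q (K.map (φ : (Fin n → ℝ) →ₗ[ℝ] (Fin n → ℝ))) ↔ IsGLmfInvariant p K := by
  constructor
  · intro hK f hf x hx
    have := hK _ (hφ.mapsTo hf) (φ x) (Submodule.mem_map_of_mem hx)
    simpa [Submodule.mem_map_equiv] using this
  · rintro hK g hg - ⟨x, hx, rfl⟩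
    obtain ⟨f, hf, rfl⟩ := hφ.surjOn hg
    simpa using Submodule.mem_map_of_mem (f := (φ : (Fin n → ℝ) →ₗ[ℝ] (Fin n → ℝ))) (hK f hf x hx)

end Invariant

section OrderTheory

variable {α β γ : Type*}

noncomputable def OrderEmbedding.isoOfRangeEq [Preorder α] [Preorder β] [Preorder γ]
    (f : α ↪o γ) (g : β ↪o γ) (h : Set.range f = Set.range g) : α ≃o β where
  toEquiv := (Equiv.ofInjective f f.injective).trans
    ((Equiv.setCongr h).trans (Equiv.ofInjective g g.injective).symm)
  map_rel_iff' {a b} := by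
    simp only [← g.le_iff_le, Equiv.trans_apply, Equiv.apply_ofInjective_symm, Equiv.setCongr_apply,
      Equiv.ofInjective_apply, f.le_iff_le]

@[simp]
theorem OrderEmbedding.apply_isoOfRangeEq [Preorder α] [Preorder β] [Preorder γ]
    (f : α ↪o γ) (g : β ↪o γ) (h : Set.range f = Set.range g) (a : α) :
    g (f.isoOfRangeEq g h a) = f a :=
  Equiv.apply_ofInjective_symm g.injective _

theorem InfIrred.map_orderIso [SemilatticeInf α] [SemilatticeInf β] {a : α} (ha : InfIrred a)
    (e : α ≃o β) : InfIrred (e a) := by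
  refine ⟨fun hmax => ha.1 (e.isMax_apply.mp hmax), fun b c hbc => ?_⟩
  have := ha.2 (show e.symm b ⊓ e.symm c = a by rw [← e.symm.map_inf, hbc, e.symm_apply_apply])
  simpa [e.symm_apply_eq] using this

theorem OrderIso.infIrred_apply_iff [SemilatticeInf α] [SemilatticeInf β] (e : α ≃o β) {a : α} :
    InfIrred (e a) ↔ InfIrred a :=
  ⟨fun h => by simpa using h.map_orderIso e.symm, fun h => h.map_orderIso e⟩

namespace UpperSet

theorem Ici_lt_iff [PartialOrder α] {a : α} {s : UpperSet α} : Ici a < s ↔ Ioi a ≤ s := by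
  rw [← coe_ssubset_coe, ← coe_subset_coe, coe_Ici, coe_Ioi]
  refine ⟨fun ⟨hle, hnot⟩ x hx => (hle hx).lt_of_ne' fun hxa => hnot ?_,
    fun h => ⟨h.trans Set.Ioi_subset_Ici_self, fun h' => lt_irrefl a (h (h' Set.self_mem_Ici))⟩⟩
  exact fun y hy => s.upper hy (hxa ▸ hx)

variable [PartialOrder α] [PartialOrder β] [Finite α] [Finite β]

noncomputable def _root_.OrderIso.ofUpperSet (e : UpperSet α ≃o UpperSet β) : α ≃o β :=
  OrderIso.infIrredUpperSet.trans <|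
    OrderIso.trans ⟨e.toEquiv.subtypeEquiv fun _ => e.infIrred_apply_iff.symm, e.le_iff_le⟩
      OrderIso.infIrredUpperSet.symm

theorem map_Ici_ofUpperSet (e : UpperSet α ≃o UpperSet β) (a : α) :
    e (Ici a) = Ici (e.ofUpperSet a) :=
  congrArg Subtype.val (OrderIso.infIrredUpperSet.apply_symm_apply
    ⟨e (Ici a), e.infIrred_apply_iff.mpr (infIrred_Ici a)⟩).symm

theorem map_Ioi_ofUpperSet (e : UpperSet α ≃o UpperSet β) (a : α) :
    e (Ioi a) = Ioi (e.ofUpperSet a) := by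
  refine eq_of_forall_ge_iff fun s => ?_
  rw [← e.le_symm_apply, ← Ici_lt_iff, ← Ici_lt_iff, e.lt_symm_apply, map_Ici_ofUpperSet]

end UpperSet

end OrderTheory

theorem card_fiber_add_card_preimage_Ioi {ι Λ : Type*} [Finite ι] [PartialOrder Λ]
    (p : ι → Λ) (a : Λ) :
    Nat.card {i // p i = a} + Nat.card (p ⁻¹' Set.Ioi a) = Nat.card (p ⁻¹' Set.Ici a) := by
  have hdisj : Disjoint (p ⁻¹' {a}) (p ⁻¹' Set.Ioi a) :=
    Disjoint.preimage p (Set.disjoint_singleton_left.mpr (lt_irrefl a))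
  rw [← Set.Ioi_insert, Set.insert_eq, Set.preimage_union, Nat.card_coe_set_eq (_ ∪ _),
    Set.ncard_union_eq hdisj]
  rfl

theorem Equiv.Perm.exists_apply_eq_of_card_fiber_eq {α β : Type*} [Finite α] {f g : α → β}
    (h : ∀ b, Nat.card {a // f a = b} = Nat.card {a // g a = b}) :
    ∃ σ : Equiv.Perm α, ∀ a, g (σ a) = f a :=
  ⟨Equiv.ofFiberEquiv fun b => (Finite.card_eq.mp (h b)).some, Equiv.ofFiberEquiv_map _⟩

section Conjugation

variable {n : ℕ} {Λ Ω : Type} [PartialOrder Λ] [PartialOrder Ω] {p : Fin n → Λ} {q : Fin n → Ω}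
  {φ : (Fin n → ℝ) ≃ₗ[ℝ] (Fin n → ℝ)} (hp : Function.Surjective p)

theorem range_upperSetCoordSubspace :
    Set.range (upperSetCoordSubspace hp) = {K | IsGLmfInvariant p (OrderDual.ofDual K)} := by
  ext K
  exact (isGLmfInvariant_iff_exists_upperSet hp).symm

theorem range_upperSetCoordSubspace_map
    (hφ : Set.BijOn (fun f => (φ.symm.trans f).trans φ) (GLmf p) (GLmf q)) :
    Set.range ((upperSetCoordSubspace hp).trans
      (Submodule.orderIsoMapComap φ).dual.toOrderEmbedding) =
      {K | IsGLmfInvariant q (OrderDual.ofDual K)} := by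
  ext K
  constructor
  · rintro ⟨U, rfl⟩
    exact (isGLmfInvariant_map_iff hφ).mpr (isGLmfInvariant_coordSubspace U.upper)
  · intro (hK : IsGLmfInvariant q (OrderDual.ofDual K))
    have hmap := Submodule.map_comap_eq_of_surjective φ.surjective (OrderDual.ofDual K)
    obtain ⟨U, hU⟩ := (isGLmfInvariant_iff_exists_upperSet hp).mp
      ((isGLmfInvariant_map_iff hφ).mp (hmap ▸ hK))
    refine ⟨U, ?_⟩
    change OrderDual.toDual (Submodule.map _ (coordSubspace ℝ (p ⁻¹' U))) = K
    rw [hU, hmap]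
    rfl

variable (hq : Function.Surjective q)
  (hφ : Set.BijOn (fun f => (φ.symm.trans f).trans φ) (GLmf p) (GLmf q))

noncomputable def upperSetIsoOfConj : UpperSet Λ ≃o UpperSet Ω :=
  OrderEmbedding.isoOfRangeEq
    ((upperSetCoordSubspace hp).trans (Submodule.orderIsoMapComap φ).dual.toOrderEmbedding)
    (upperSetCoordSubspace hq) <| by
    rw [range_upperSetCoordSubspace_map hp hφ, range_upperSetCoordSubspace hq]

theorem coordSubspace_preimage_upperSetIsoOfConj (U : UpperSet Λ) :
    coordSubspace ℝ (q ⁻¹' upperSetIsoOfConj hp hq hφ U) =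
      (coordSubspace ℝ (p ⁻¹' U)).map (φ : (Fin n → ℝ) →ₗ[ℝ] (Fin n → ℝ)) :=
  congrArg OrderDual.ofDual (OrderEmbedding.apply_isoOfRangeEq
    ((upperSetCoordSubspace hp).trans (Submodule.orderIsoMapComap φ).dual.toOrderEmbedding)
    (upperSetCoordSubspace hq) _ U)

theorem card_preimage_upperSetIsoOfConj (U : UpperSet Λ) :
    Nat.card (q ⁻¹' upperSetIsoOfConj hp hq hφ U) = Nat.card (p ⁻¹' U) := by
  rw [← finrank_coordSubspace (R := ℝ), ← finrank_coordSubspace (R := ℝ),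
    coordSubspace_preimage_upperSetIsoOfConj, LinearEquiv.finrank_map_eq]

theorem card_fiber_eq_of_conj [Finite Λ] [Finite Ω] (a : Λ) :
    Nat.card {i // p i = a} = Nat.card {i // q i = (upperSetIsoOfConj hp hq hφ).ofUpperSet a} := by
  have hIci := card_preimage_upperSetIsoOfConj hp hq hφ (UpperSet.Ici a)
  have hIoi := card_preimage_upperSetIsoOfConj hp hq hφ (UpperSet.Ioi a)
  rw [UpperSet.map_Ici_ofUpperSet, UpperSet.coe_Ici, UpperSet.coe_Ici] at hIci
  rw [UpperSet.map_Ioi_ofUpperSet, UpperSet.coe_Ioi, UpperSet.coe_Ioi] at hIoi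
  have hp_a := card_fiber_add_card_preimage_Ioi p a
  have hq_a := card_fiber_add_card_preimage_Ioi q ((upperSetIsoOfConj hp hq hφ).ofUpperSet a)
  omega

end Conjugation

/-- If `(Λ,p)` and `(Ω,q)` are equivalent multifoliate
structures on `{1,…,n}`, there are an order isomorphism `ω : Λ → Ω` and a
permutation `σ` with `q = ω ∘ p ∘ σ`; in particular corresponding fibers of
`p` and `q` have the same cardinality. -/
theorem stmt_15 {n : ℕ} {Λ Ω : Type} [PartialOrder Λ] [PartialOrder Ω]
    [Finite Λ] [Finite Ω]
    (p : Fin n → Λ) (q : Fin n → Ω)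
    (hp : Function.Surjective p) (hq : Function.Surjective q)
    (h : MFEquiv p q) :
    ∃ (ω : Λ ≃o Ω) (σ : Equiv.Perm (Fin n)),
      (∀ i : Fin n, q i = ω (p (σ i))) ∧
      ∀ α : Λ, Nat.card {i : Fin n // p i = α} =
        Nat.card {i : Fin n // q i = ω α} := by
  obtain ⟨φ, hφ⟩ := h
  set ω := (upperSetIsoOfConj hp hq hφ).ofUpperSet
  have hcard : ∀ α, Nat.card {i // p i = α} = Nat.card {i // q i = ω α} :=
    card_fiber_eq_of_conj hp hq hφ
  obtain ⟨σ, hσ⟩ := Equiv.Perm.exists_apply_eq_of_card_fiber_eq (f := q) (g := ω ∘ p) <| by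
    intro β
    obtain ⟨α, rfl⟩ := ω.surjective β
    simpa only [Function.comp_apply, EquivLike.apply_eq_iff_eq] using (hcard α).symm
  exact ⟨ω, σ, fun i => (hσ i).symm, hcard⟩
end

section
/- Let ξ = (L_α, ξ_α^β, Λ, L) be a finite complete projective system of vector spaces. If W ⊆ L* is a linear subspace such that f*(W) ⊆ W for every f ∈ GL(ξ), then W = (ker ξ_α)⁰ for some α ∈ Λ, where (ker ξ_α)⁰ denotes the annihilator of ker ξ_α in L*. -/
theorem Submodule.mapsTo_dualCoannihilator {R M : Type*} [CommSemiring R] [AddCommMonoid M]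
    [Module R M] {W : Submodule R (Module.Dual R M)} {f : M →ₗ[R] M}
    (hf : ∀ φ ∈ W, f.dualMap φ ∈ W) :
    Set.MapsTo f W.dualCoannihilator W.dualCoannihilator := by
  intro x hx
  simp only [SetLike.mem_coe, Submodule.mem_dualCoannihilator] at hx ⊢
  exact fun φ hφ => hx _ (hf φ hφ)

namespace ProjSys

variable {Λ : Type} [PartialOrder Λ]

instance finiteDimensional_limSub [Finite Λ] (ξ : ProjSys Λ) :
    FiniteDimensional ℝ ξ.limSub :=
  have := Fintype.ofFinite Λ
  FiniteDimensional.finiteDimensional_submodule ξ.limSub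

theorem invariant_dualCoannihilator (ξ : ProjSys Λ) {W : Submodule ℝ (Module.Dual ℝ ξ.limSub)}
    (hW : ∀ f ∈ ξ.GLset, ∀ φ ∈ W, (f : ξ.limSub →ₗ[ℝ] ξ.limSub).dualMap φ ∈ W) :
    ξ.Invariant W.dualCoannihilator :=
  fun f hf _ hx => Submodule.mapsTo_dualCoannihilator (hW f hf) hx

end ProjSys

theorem stmt_17_general {Λ : Type} [PartialOrder Λ] [Finite Λ] (ξ : ProjSys Λ)
    (hc : ξ.Complete)
    (W : Submodule ℝ (Module.Dual ℝ ↥ξ.limSub))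
    (hW : ∀ f ∈ ξ.GLset, ∀ φ ∈ W,
      (f : ↥ξ.limSub →ₗ[ℝ] ↥ξ.limSub).dualMap φ ∈ W) :
    ∃ α : Λ, W = (LinearMap.ker (ξ.proj α)).dualAnnihilator := by
  obtain ⟨α, hα⟩ := hc _ (ξ.invariant_dualCoannihilator hW) inferInstance
  exact ⟨α, by rw [← hα, Subspace.dualCoannihilator_dualAnnihilator_eq]⟩

/-- For a finite complete projective system, every subspace of
`L*` invariant under all dual maps `f*`, `f ∈ GL(ξ)`, is the annihilator of
the kernel of some canonical projection. -/
theorem stmt_17 {Λ : Type} [PartialOrder Λ] [Finite Λ] (ξ : ProjSys Λ)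
    (hsurj : ∀ α : Λ, Function.Surjective (ξ.proj α))
    (hc : ξ.Complete)
    (W : Submodule ℝ (Module.Dual ℝ ↥ξ.limSub))
    (hW : ∀ f ∈ ξ.GLset, ∀ φ ∈ W,
      (f : ↥ξ.limSub →ₗ[ℝ] ↥ξ.limSub).dualMap φ ∈ W) :
    ∃ α : Λ, W = (LinearMap.ker (ξ.proj α)).dualAnnihilator :=
  stmt_17_general ξ hc W hW
end
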